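/- Let (U_0, ..., U_k) be a positively separated tuple of subsets of X with x_0 ∈ U_0, δ := min_{i≠j} dist(U_i, U_j), and U := U_0 ∪ ... ∪ U_k. If S, T ∈ S_Φ(X, x_0) have supports contained in U and d_Φ(S, T) < δ, then d_Φ(S ∩ U_i, T ∩ U_i) ≤ d_Φ(S, T) for every i, and rank(S ∩ U_i) = rank(T ∩ U_i) for every i = 1, ..., k. -/

import Mathlib

open Filter

/-- A symmetric norm: a norm on the space `c_00` of finitely supported real
sequences (modelled as `ℕ →₀ ℝ`), normalised by `Φ(1,0,0,…) = 1`, and invariant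
under permutations of the entries and under replacing entries by their absolute
values. -/
structure SymmetricNorm where
  toFun : (ℕ →₀ ℝ) → ℝ
  nonneg : ∀ ξ, 0 ≤ toFun ξ
  eq_zero : ∀ ξ, toFun ξ = 0 → ξ = 0
  add_le : ∀ ξ η, toFun (ξ + η) ≤ toFun ξ + toFun η
  smul_eq : ∀ (c : ℝ) (ξ), toFun (c • ξ) = |c| * toFun ξ
  norm_single : toFun (Finsupp.single 0 1) = 1
  perm_invariant : ∀ (π : Equiv.Perm ℕ) (ξ), toFun (Finsupp.equivMapDomain π ξ) = toFun ξ
  abs_invariant : ∀ (ξ : ℕ →₀ ℝ), toFun (Finsupp.mapRange (fun a => |a|) abs_zero ξ) = toFun ξ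

/-- The truncation `(ξ_0, …, ξ_{n-1}, 0, 0, …)` of a sequence, as an element of `c_00`. -/
noncomputable def truncF (ξ : ℕ → ℝ) (n : ℕ) : ℕ →₀ ℝ :=
  ∑ i ∈ Finset.range n, Finsupp.single i (ξ i)

/-- The extension of a symmetric norm to sequences: `Φ(ξ) = lim_n Φ(ξ_0,…,ξ_{n-1},0,0,…)`. -/
noncomputable def SymmetricNorm.ext (Φ : SymmetricNorm) (ξ : ℕ → ℝ) : ℝ :=
  limUnder atTop fun n => Φ.toFun (truncF ξ n)

/-- Membership in the natural domain `ℓ_Φ`: the sequence tends to `0` and the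
`Φ`-norms of its truncations converge. -/
def MemLPhi (Φ : SymmetricNorm) (ξ : ℕ → ℝ) : Prop :=
  Tendsto ξ atTop (nhds 0) ∧ ∃ L, Tendsto (fun n => Φ.toFun (truncF ξ n)) atTop (nhds L)

/-- Membership in `ℓ_Φ^+`: nonnegative `Φ`-summable sequences. -/
def MemLPhiPlus (Φ : SymmetricNorm) (ξ : ℕ → ℝ) : Prop :=
  (∀ i, 0 ≤ ξ i) ∧ MemLPhi Φ ξ

/-- A symmetric norm is regular if `Φ(ξ_{n+1}, ξ_{n+2}, …) → 0` for every `ξ ∈ ℓ_Φ`. -/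
def SymmetricNorm.Regular (Φ : SymmetricNorm) : Prop :=
  ∀ ξ : ℕ → ℝ, MemLPhi Φ ξ →
    Tendsto (fun n => Φ.ext fun i => ξ (n + i)) atTop (nhds 0)

/-- `partialMax ξ k` is the supremum of sums of `k` distinct entries of `ξ`;
for nonnegative `ξ ∈ c_0` this equals `ξ^↓_1 + ⋯ + ξ^↓_k`. -/
noncomputable def partialMax (ξ : ℕ → ℝ) (k : ℕ) : ℝ :=
  sSup ((fun s : Finset ℕ => ∑ i ∈ s, ξ i) '' {s | s.card = k})

/-- The nonincreasing rearrangement `ξ^↓` of a (nonnegative, null) sequence,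
defined via `ξ^↓_1 = max ξ_i`, `ξ^↓_1 + ξ^↓_2 = max_{i ≠ j} (ξ_i + ξ_j)`, …. -/
noncomputable def decRearr (ξ : ℕ → ℝ) (k : ℕ) : ℝ :=
  partialMax ξ (k + 1) - partialMax ξ k
open scoped Classical

variable {X : Type*} [MetricSpace X]

/-- `s : ℕ → X` is an enumeration of the countable multiset `S` in `(X, x₀)`:
every point other than the basepoint occurs in `s` exactly according to its
multiplicity in `S`. -/
def IsEnum (x0 : X) (S : X → ℕ∞) (s : ℕ → X) : Prop :=
  ∀ x, x ≠ x0 → S x = {i : ℕ | s i = x}.encard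

/-- A countable multiset in `(X, x₀)`: a multiplicity function in which the
basepoint is the only point of infinite multiplicity and whose support is
countable. -/
def IsCMultiset (x0 : X) (S : X → ℕ∞) : Prop :=
  S x0 = ⊤ ∧ (∀ x, x ≠ x0 → S x ≠ ⊤) ∧ {x | S x ≠ 0}.Countable

/-- Membership in `S_Φ(X, x₀)`: a countable multiset whose points `s_i` satisfy
`(d(x₀, s_i))_i ∈ ℓ_Φ`. -/
def MemSPhi (Φ : SymmetricNorm) (x0 : X) (S : X → ℕ∞) : Prop :=
  IsCMultiset x0 S ∧ ∃ s : ℕ → X, IsEnum x0 S s ∧ MemLPhi Φ fun i => dist x0 (s i)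

/-- The distance `d_Φ(S, T)`: the infimum over pairs of enumerations `(s_i), (t_i)`
of `S, T` of `Φ(d(s_1,t_1), d(s_2,t_2), …)`. -/
noncomputable def dPhi (Φ : SymmetricNorm) (x0 : X) (S T : X → ℕ∞) : ℝ :=
  sInf {r | ∃ s t : ℕ → X, IsEnum x0 S s ∧ IsEnum x0 T t ∧
    MemLPhi Φ (fun i => dist (s i) (t i)) ∧ r = Φ.ext fun i => dist (s i) (t i)}

/-- The sum of two multisets (addition of multiplicities away from the basepoint). -/
noncomputable def msum (x0 : X) (S T : X → ℕ∞) : X → ℕ∞ := fun x => if x = x0 then ⊤ else S x + T x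

/-- The difference of two multisets (subtraction of multiplicities away from the
basepoint). -/
noncomputable def mdiff (x0 : X) (S T : X → ℕ∞) : X → ℕ∞ := fun x => if x = x0 then ⊤ else S x - T x

/-- The intersection of a multiset with a subset `V ⊆ X`. -/
noncomputable def minter (x0 : X) (S : X → ℕ∞) (V : Set X) : X → ℕ∞ :=
  fun x => if x = x0 then ⊤ else if x ∈ V then S x else 0

/-- The multiset `S` has rank `n`: its total multiplicity away from the basepoint
is `n`, i.e. its non-basepoint part can be listed by a tuple of length `n`. -/
def HasRank (x0 : X) (S : X → ℕ∞) (n : ℕ) : Prop :=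
  ∃ f : Fin n → X, (∀ i, f i ≠ x0) ∧ ∀ x, x ≠ x0 → S x = {i : Fin n | f i = x}.encard

/-! If `d_Φ(S, T) < δ`, pick enumerations `(s_j)`, `(t_j)` of `S`, `T` whose cost
`Φ(d(s_j, t_j))_j` is below `δ` (and arbitrarily close to `d_Φ(S, T)`). Each entry is bounded by
the `Φ`-norm, so `d(s_j, t_j) < δ` and `s_j`, `t_j` lie in the same piece `U_i`. Replacing every
point outside `U_i` by `x₀` enumerates `S ∩ U_i` and `T ∩ U_i` with entrywise smaller distances,
and a symmetric norm is monotone in the absolute values of the entries. For `i ≠ 0` the rank of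
`S ∩ U_i` is the number of indices `j` with `s_j ∈ U_i`, which is also the rank of `T ∩ U_i`. -/

lemma truncF_apply (ξ : ℕ → ℝ) (n i : ℕ) : truncF ξ n i = if i < n then ξ i else 0 := by
  simp [truncF, Finsupp.single_apply]

lemma abs_truncF_le {ξ η : ℕ → ℝ} (h : ∀ i, |ξ i| ≤ |η i|) (n i : ℕ) :
    |truncF ξ n i| ≤ |truncF η n i| := by
  rw [truncF_apply, truncF_apply]
  split_ifs
  exacts [h i, le_rfl]

lemma abs_truncF_mono (ξ : ℕ → ℝ) {n m : ℕ} (h : n ≤ m) (i : ℕ) :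
    |truncF ξ n i| ≤ |truncF ξ m i| := by
  rw [truncF_apply, truncF_apply]
  split_ifs with hn hm
  exacts [le_rfl, absurd (hn.trans_le h) hm, by simp, le_rfl]

lemma truncF_add (ξ η : ℕ → ℝ) (n : ℕ) :
    truncF (fun i => ξ i + η i) n = truncF ξ n + truncF η n := by
  simp only [truncF, Finsupp.single_add, Finset.sum_add_distrib]

namespace SymmetricNorm

variable (Φ : SymmetricNorm)

lemma toFun_update_neg (η : ℕ →₀ ℝ) (i : ℕ) : Φ.toFun (η.update i (-η i)) = Φ.toFun η := by
  rw [← Φ.abs_invariant, ← Φ.abs_invariant η]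
  congr 1
  ext j
  simp only [Finsupp.mapRange_apply, Finsupp.update_apply]
  split_ifs with h <;> simp [h]

lemma toFun_update_le {η : ℕ →₀ ℝ} {i : ℕ} {c : ℝ} (h : |c| ≤ |η i|) :
    Φ.toFun (η.update i c) ≤ Φ.toFun η := by
  set a := η i
  rcases eq_or_ne a 0 with ha0 | ha0
  · have hc : c = 0 := abs_nonpos_iff.mp (by simpa [ha0] using h)
    rw [hc, ← ha0, Finsupp.update_self]
  -- `η.update i c` is a convex combination of `η` and its sign flip at `i`.
  have hcomb : η.update i c =
      ((a + c) / (2 * a)) • η + ((a - c) / (2 * a)) • η.update i (-a) := by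
    ext j
    simp only [Finsupp.update_apply, Finsupp.add_apply, Finsupp.smul_apply, smul_eq_mul]
    split_ifs with hj
    · subst hj; field_simp; ring
    · field_simp; ring
  have hcoef : |(a + c) / (2 * a)| + |(a - c) / (2 * a)| = 1 := by
    rw [abs_div, abs_div, ← add_div, div_eq_one_iff_eq (by positivity), abs_mul,
      abs_two]
    rcases abs_cases (a + c) with ⟨_, _⟩ | ⟨_, _⟩ <;>
      rcases abs_cases (a - c) with ⟨_, _⟩ | ⟨_, _⟩ <;>
      rcases abs_cases a with ⟨_, _⟩ | ⟨_, _⟩ <;>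
      rcases abs_cases c with ⟨_, _⟩ | ⟨_, _⟩ <;> linarith
  calc Φ.toFun (η.update i c)
      ≤ |(a + c) / (2 * a)| * Φ.toFun η + |(a - c) / (2 * a)| * Φ.toFun (η.update i (-a)) := by
        rw [hcomb, ← Φ.smul_eq, ← Φ.smul_eq]; exact Φ.add_le _ _
    _ = Φ.toFun η := by rw [toFun_update_neg, ← add_mul, hcoef, one_mul]

lemma toFun_le_of_abs_le_of_eqOn_compl (F : Finset ℕ) :
    ∀ {ξ η : ℕ →₀ ℝ}, (∀ i, |ξ i| ≤ |η i|) → (∀ i ∉ F, ξ i = η i) → Φ.toFun ξ ≤ Φ.toFun η := by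
  induction F using Finset.induction with
  | empty =>
    intro ξ η _ heq
    rw [Finsupp.ext fun i => heq i (Finset.notMem_empty i)]
  | insert a F _ ih =>
    intro ξ η hle heq
    calc Φ.toFun ξ ≤ Φ.toFun (η.update a (ξ a)) := by
          refine ih (fun i => ?_) (fun i hi => ?_) <;>
            simp only [Finsupp.update_apply] <;> split_ifs with h
          · rw [h]
          · exact hle i
          · rw [h]
          · exact heq i (by simp [h, hi])
      _ ≤ Φ.toFun η := Φ.toFun_update_le (hle a)

lemma toFun_mono {ξ η : ℕ →₀ ℝ} (h : ∀ i, |ξ i| ≤ |η i|) : Φ.toFun ξ ≤ Φ.toFun η :=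
  Φ.toFun_le_of_abs_le_of_eqOn_compl (ξ.support ∪ η.support) h fun i hi => by
    simp_all

lemma toFun_single (i : ℕ) (c : ℝ) : Φ.toFun (Finsupp.single i c) = |c| := by
  have h : Finsupp.single i c =
      c • Finsupp.equivMapDomain (Equiv.swap 0 i) (Finsupp.single 0 1) := by
    rw [Finsupp.equivMapDomain_single, Equiv.swap_apply_left, Finsupp.smul_single, smul_eq_mul,
      mul_one]
  rw [h, Φ.smul_eq, Φ.perm_invariant, Φ.norm_single, mul_one]

lemma monotone_toFun_truncF (ξ : ℕ → ℝ) : Monotone fun n => Φ.toFun (truncF ξ n) :=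
  fun _ _ h => Φ.toFun_mono (abs_truncF_mono ξ h)

variable {Φ}

lemma tendsto_toFun_truncF_ext {ξ : ℕ → ℝ} (hξ : MemLPhi Φ ξ) :
    Tendsto (fun n => Φ.toFun (truncF ξ n)) atTop (nhds (Φ.ext ξ)) := by
  obtain ⟨L, hL⟩ := hξ.2
  rwa [SymmetricNorm.ext, hL.limUnder_eq]

lemma toFun_truncF_le_ext {ξ : ℕ → ℝ} (hξ : MemLPhi Φ ξ) (n : ℕ) :
    Φ.toFun (truncF ξ n) ≤ Φ.ext ξ :=
  (Φ.monotone_toFun_truncF ξ).ge_of_tendsto (tendsto_toFun_truncF_ext hξ) n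

lemma ext_le_of_forall_le {ξ : ℕ → ℝ} (hξ : MemLPhi Φ ξ) {C : ℝ}
    (h : ∀ n, Φ.toFun (truncF ξ n) ≤ C) : Φ.ext ξ ≤ C :=
  le_of_tendsto' (tendsto_toFun_truncF_ext hξ) h

lemma abs_le_ext {ξ : ℕ → ℝ} (hξ : MemLPhi Φ ξ) (i : ℕ) : |ξ i| ≤ Φ.ext ξ := by
  refine (Φ.toFun_single i (ξ i)).symm.trans_le
    ((Φ.toFun_mono fun j => ?_).trans (toFun_truncF_le_ext hξ (i + 1)))
  rw [truncF_apply, Finsupp.single_apply]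
  split_ifs with h1 h2 <;> subst_vars <;> simp_all

lemma ext_nonneg {ξ : ℕ → ℝ} (hξ : MemLPhi Φ ξ) : 0 ≤ Φ.ext ξ :=
  (abs_nonneg _).trans (abs_le_ext hξ 0)

lemma ext_le_ext {ξ η : ℕ → ℝ} (hη : MemLPhi Φ η) (hξ : MemLPhi Φ ξ) (h : ∀ i, |ξ i| ≤ |η i|) :
    Φ.ext ξ ≤ Φ.ext η :=
  ext_le_of_forall_le hξ fun n =>
    (Φ.toFun_mono (abs_truncF_le h n)).trans (toFun_truncF_le_ext hη n)

end SymmetricNorm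

lemma memLPhi_of_forall_le {Φ : SymmetricNorm} {ξ : ℕ → ℝ} (h0 : Tendsto ξ atTop (nhds 0))
    {C : ℝ} (h : ∀ n, Φ.toFun (truncF ξ n) ≤ C) : MemLPhi Φ ξ :=
  ⟨h0, _, tendsto_atTop_ciSup (Φ.monotone_toFun_truncF ξ) ⟨C, Set.forall_mem_range.2 h⟩⟩

lemma MemLPhi.of_abs_le {Φ : SymmetricNorm} {ξ η : ℕ → ℝ} (hη : MemLPhi Φ η)
    (h : ∀ i, |ξ i| ≤ |η i|) : MemLPhi Φ ξ :=
  memLPhi_of_forall_le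
    (squeeze_zero_norm h (by simpa using hη.1.abs))
    fun n => (Φ.toFun_mono (abs_truncF_le h n)).trans (Φ.toFun_truncF_le_ext hη n)

lemma MemLPhi.add {Φ : SymmetricNorm} {ξ η : ℕ → ℝ} (hξ : MemLPhi Φ ξ) (hη : MemLPhi Φ η) :
    MemLPhi Φ (fun i => ξ i + η i) :=
  memLPhi_of_forall_le (by simpa using hξ.1.add hη.1) fun n => by
    rw [truncF_add]
    exact (Φ.add_le _ _).trans
      (add_le_add (Φ.toFun_truncF_le_ext hξ n) (Φ.toFun_truncF_le_ext hη n))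

section Enumeration

variable {Y : Type*}

lemma encard_preimage_eq_finsum {α : Type*} (f : α → Y) {t : Set Y} (ht : t.Finite) :
    (f ⁻¹' t).encard = ∑ᶠ y ∈ t, (f ⁻¹' {y}).encard := by
  rw [← ht.encard_biUnion (Set.pairwiseDisjoint_fiber f t), ← Set.preimage_iUnion₂,
    Set.biUnion_of_singleton]

lemma IsEnum.hasRank_iff {x0 : Y} {M : Y → ℕ∞} {u : ℕ → Y} (hu : IsEnum x0 M u) (n : ℕ) :
    HasRank x0 M n ↔ {j | u j ≠ x0}.encard = n := by
  constructor
  · rintro ⟨f, hf0, hf⟩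
    have hfib : ∀ y ≠ x0, (u ⁻¹' {y}).encard = (f ⁻¹' {y}).encard := fun y hy =>
      (hu y hy).symm.trans (hf y hy)
    have hrange : Set.range f ⊆ {x0}ᶜ := Set.range_subset_iff.2 hf0
    have hsupp : {j | u j ≠ x0} = u ⁻¹' Set.range f := by
      ext j
      refine ⟨fun hj => ?_, fun hj => hrange hj⟩
      obtain ⟨a, ha⟩ : (f ⁻¹' {u j}).Nonempty := by
        rw [← Set.encard_pos, ← hfib _ hj]
        exact Set.encard_pos.2 ⟨j, rfl⟩
      exact ⟨a, ha⟩
    rw [hsupp, encard_preimage_eq_finsum u (Set.finite_range f),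
      finsum_mem_congr rfl fun y hy => hfib y (hrange hy),
      ← encard_preimage_eq_finsum f (Set.finite_range f), Set.preimage_range, Set.encard_univ,
      ENat.card_eq_coe_fintype_card, Fintype.card_fin]
  · intro h
    obtain ⟨e⟩ := Cardinal.mk_eq_nat_iff.1 (Cardinal.toENat_eq_natCast.1 h)
    refine ⟨fun a => u (e.symm a), fun a => (e.symm a).2, fun y hy => ?_⟩
    rw [hu y hy, ← (Subtype.val_injective.comp e.symm.injective).encard_image]
    congr 1
    ext j
    refine ⟨fun hj => ⟨e ⟨j, show u j ≠ x0 from (show u j = y from hj) ▸ hy⟩, by simpa using hj⟩,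
      ?_⟩
    rintro ⟨a, ha, rfl⟩
    exact ha

noncomputable def enumInter (x0 : Y) (s : ℕ → Y) (V : Set Y) : ℕ → Y :=
  fun j => if s j ∈ V then s j else x0

variable {x0 : Y} {S : Y → ℕ∞} {s : ℕ → Y} {V : Set Y}

lemma IsEnum.minter (hs : IsEnum x0 S s) (V : Set Y) :
    IsEnum x0 (minter x0 S V) (enumInter x0 s V) := by
  intro x hx
  have hfib : {j | enumInter x0 s V j = x} = if x ∈ V then {j | s j = x} else ∅ := by
    ext j
    simp only [enumInter]
    split_ifs <;> grind
  rw [hfib, _root_.minter, if_neg hx]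
  split_ifs
  exacts [hs x hx, Set.encard_empty.symm]

lemma hasRank_minter_iff (hs : IsEnum x0 S s) (hx0 : x0 ∉ V) (n : ℕ) :
    HasRank x0 (minter x0 S V) n ↔ {j | s j ∈ V}.encard = n := by
  have hsupp : {j | enumInter x0 s V j ≠ x0} = {j | s j ∈ V} := by
    ext j
    simp only [enumInter, Set.mem_ofPred_eq]
    split_ifs with h
    · exact iff_of_true (fun h' => hx0 (h' ▸ h)) h
    · exact iff_of_false (not_not.2 rfl) h
  rw [(hs.minter V).hasRank_iff, hsupp]

lemma IsEnum.mem_of_support_subset (hs : IsEnum x0 S s) (hx0 : x0 ∈ V)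
    (hS : {x | S x ≠ 0} ⊆ V) (j : ℕ) : s j ∈ V := by
  by_cases hj : s j = x0
  · exact hj ▸ hx0
  · refine hS (show S (s j) ≠ 0 from ?_)
    rw [hs _ hj]
    exact Set.encard_ne_zero.2 ⟨j, rfl⟩

end Enumeration

lemma eq_of_mem_of_dist_lt {ι : Type*} {U : ι → Set X} {δ : ℝ}
    (hsep : ∀ i j, i ≠ j → ∀ x ∈ U i, ∀ y ∈ U j, δ ≤ dist x y) {i j : ι} {x y : X}
    (hx : x ∈ U i) (hy : y ∈ U j) (h : dist x y < δ) : i = j :=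
  by_contra fun hij => (hsep i j hij x hx y hy).not_gt h

lemma mem_iff_mem_of_dist_lt {ι : Type*} {U : ι → Set X} {δ : ℝ}
    (hsep : ∀ i j, i ≠ j → ∀ x ∈ U i, ∀ y ∈ U j, δ ≤ dist x y) {x y : X}
    (hx : x ∈ ⋃ i, U i) (hy : y ∈ ⋃ i, U i) (h : dist x y < δ) (i : ι) : x ∈ U i ↔ y ∈ U i := by
  obtain ⟨a, ha⟩ := Set.mem_iUnion.1 hx
  obtain ⟨b, hb⟩ := Set.mem_iUnion.1 hy
  obtain rfl := eq_of_mem_of_dist_lt hsep ha hb h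
  exact ⟨fun hi => eq_of_mem_of_dist_lt hsep hi hb h ▸ hb,
    fun hi => (eq_of_mem_of_dist_lt hsep ha hi h).symm ▸ ha⟩

lemma dist_enumInter_le {x0 : X} {s t : ℕ → X} {V : Set X} {j : ℕ} (h : s j ∈ V ↔ t j ∈ V) :
    dist (enumInter x0 s V j) (enumInter x0 t V j) ≤ dist (s j) (t j) := by
  by_cases hs : s j ∈ V
  · simp [enumInter, hs, h.1 hs]
  · simp [enumInter, hs, mt h.2 hs]

section dPhi

variable {Φ : SymmetricNorm} {x0 : X} {S T : X → ℕ∞} {s t : ℕ → X}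

lemma dPhi_nonneg : 0 ≤ dPhi Φ x0 S T :=
  Real.sInf_nonneg <| by
    rintro _ ⟨s, t, -, -, hm, rfl⟩
    exact SymmetricNorm.ext_nonneg hm

lemma dPhi_le_ext (hs : IsEnum x0 S s) (ht : IsEnum x0 T t)
    (hm : MemLPhi Φ fun j => dist (s j) (t j)) :
    dPhi Φ x0 S T ≤ Φ.ext fun j => dist (s j) (t j) := by
  refine csInf_le ⟨0, ?_⟩ ⟨s, t, hs, ht, hm, rfl⟩
  rintro _ ⟨s, t, -, -, hm, rfl⟩
  exact SymmetricNorm.ext_nonneg hm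

lemma MemSPhi.exists_isEnum_ext_lt (hS : MemSPhi Φ x0 S) (hT : MemSPhi Φ x0 T) {r : ℝ}
    (h : dPhi Φ x0 S T < r) :
    ∃ s t : ℕ → X, IsEnum x0 S s ∧ IsEnum x0 T t ∧ MemLPhi Φ (fun j => dist (s j) (t j)) ∧
      (Φ.ext fun j => dist (s j) (t j)) < r := by
  obtain ⟨-, s, hs, hsm⟩ := hS
  obtain ⟨-, t, ht, htm⟩ := hT
  have hm : MemLPhi Φ fun j => dist (s j) (t j) := (hsm.add htm).of_abs_le fun j => by
    rw [abs_dist, abs_of_nonneg (by positivity)]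
    exact dist_triangle_left _ _ _
  unfold dPhi at h
  obtain ⟨_, ⟨s, t, hs, ht, hm, rfl⟩, hlt⟩ :=
    exists_lt_of_csInf_lt (by exact ⟨_, s, t, hs, ht, hm, rfl⟩) h
  exact ⟨s, t, hs, ht, hm, hlt⟩

lemma dPhi_minter_le (hs : IsEnum x0 S s) (ht : IsEnum x0 T t)
    (hm : MemLPhi Φ fun j => dist (s j) (t j)) {V : Set X} (hV : ∀ j, s j ∈ V ↔ t j ∈ V) :
    dPhi Φ x0 (minter x0 S V) (minter x0 T V) ≤ Φ.ext fun j => dist (s j) (t j) := by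
  have hle : ∀ j, |dist (enumInter x0 s V j) (enumInter x0 t V j)| ≤ |dist (s j) (t j)| :=
    fun j => by simpa only [abs_dist] using dist_enumInter_le (hV j)
  exact (dPhi_le_ext (hs.minter V) (ht.minter V) (hm.of_abs_le hle)).trans
    (SymmetricNorm.ext_le_ext hm (hm.of_abs_le hle) hle)

end dPhi

theorem dPhi_minter_general (x0 : X) (Φ : SymmetricNorm) (k : ℕ) (U : Fin (k + 1) → Set X)
    (hx0 : x0 ∈ U 0) (δ : ℝ)
    (hsep : ∀ i j, i ≠ j → ∀ x ∈ U i, ∀ y ∈ U j, δ ≤ dist x y)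
    (S T : X → ℕ∞) (hS : MemSPhi Φ x0 S) (hT : MemSPhi Φ x0 T)
    (hSsupp : {x | S x ≠ 0} ⊆ ⋃ i, U i) (hTsupp : {x | T x ≠ 0} ⊆ ⋃ i, U i)
    (hd : dPhi Φ x0 S T < δ) :
    (∀ i, dPhi Φ x0 (minter x0 S (U i)) (minter x0 T (U i)) ≤ dPhi Φ x0 S T) ∧
      (∀ i, i ≠ 0 → ∀ n : ℕ,
        HasRank x0 (minter x0 S (U i)) n ↔ HasRank x0 (minter x0 T (U i)) n) := by
  have hx0U : x0 ∈ ⋃ i, U i := Set.mem_iUnion.2 ⟨0, hx0⟩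
  -- Entries are bounded by the `Φ`-norm, so paired points are `δ`-close, hence in one `U i`.
  have hmatch : ∀ {s t : ℕ → X}, IsEnum x0 S s → IsEnum x0 T t →
      MemLPhi Φ (fun j => dist (s j) (t j)) → (Φ.ext fun j => dist (s j) (t j)) < δ →
      ∀ i j, s j ∈ U i ↔ t j ∈ U i := fun hs ht hm hlt i j =>
    mem_iff_mem_of_dist_lt hsep (hs.mem_of_support_subset hx0U hSsupp j)
      (ht.mem_of_support_subset hx0U hTsupp j)
      ((le_abs_self _).trans_lt ((SymmetricNorm.abs_le_ext hm j).trans_lt hlt)) i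
  refine ⟨fun i => le_of_forall_gt_imp_ge_of_dense fun r hr => ?_, fun i hi n => ?_⟩
  · obtain ⟨s, t, hs, ht, hm, hlt⟩ := hS.exists_isEnum_ext_lt hT (lt_min hr hd)
    exact (dPhi_minter_le hs ht hm (hmatch hs ht hm (hlt.trans_le (min_le_right _ _)) i)).trans
      (hlt.le.trans (min_le_left _ _))
  · obtain ⟨s, t, hs, ht, hm, hlt⟩ := hS.exists_isEnum_ext_lt hT hd
    have hx0i : x0 ∉ U i := fun h =>
      hi (eq_of_mem_of_dist_lt hsep h hx0 ((dist_self x0).trans_lt (dPhi_nonneg.trans_lt hd)))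
    rw [hasRank_minter_iff hs hx0i, hasRank_minter_iff ht hx0i,
      show {j | s j ∈ U i} = {j | t j ∈ U i} from Set.ext (hmatch hs ht hm hlt i)]

/-- Let `(U_0, …, U_k)` be a positively separated tuple of subsets of `X` with
`x₀ ∈ U_0` and `δ > 0` a lower bound on the pairwise distances. If `S, T ∈
S_Φ(X, x₀)` have supports contained in `U_0 ∪ ⋯ ∪ U_k` and `d_Φ(S, T) < δ`, then
`d_Φ(S ∩ U_i, T ∩ U_i) ≤ d_Φ(S, T)` for every `i`, and `rank (S ∩ U_i) =
rank (T ∩ U_i)` for every `i ≠ 0`. -/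
theorem dPhi_minter (x0 : X) (Φ : SymmetricNorm) (k : ℕ) (U : Fin (k + 1) → Set X)
    (hx0 : x0 ∈ U 0) (δ : ℝ) (hδ : 0 < δ)
    (hsep : ∀ i j, i ≠ j → ∀ x ∈ U i, ∀ y ∈ U j, δ ≤ dist x y)
    (S T : X → ℕ∞) (hS : MemSPhi Φ x0 S) (hT : MemSPhi Φ x0 T)
    (hSsupp : {x | S x ≠ 0} ⊆ ⋃ i, U i) (hTsupp : {x | T x ≠ 0} ⊆ ⋃ i, U i)
    (hd : dPhi Φ x0 S T < δ) :
    (∀ i, dPhi Φ x0 (minter x0 S (U i)) (minter x0 T (U i)) ≤ dPhi Φ x0 S T) ∧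
      (∀ i, i ≠ 0 → ∀ n : ℕ,
        HasRank x0 (minter x0 S (U i)) n ↔ HasRank x0 (minter x0 T (U i)) n) :=
  dPhi_minter_general x0 Φ k U hx0 δ hsep S T hS hT hSsupp hTsupp hd
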